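/- arXiv:2208.04824 — 4 statements merged into one kernel-verified Lean document; each statement's English description precedes it below -/
import Mathlib

section
/- Suppose (p, q) : ℝ → ℂ² satisfies the Hamiltonian system q' = p, p' = 2q³ + tq + θ with θ = 0, and q(t) ≠ 0 for all t. Define Q = −2^{-1/3}·p/q, P = 2^{1/3}(q² − p²/(2q²)) − s/2 and new time s = −2^{1/3} t. Then Q satisfies d²Q/ds² = 2Q³ + sQ − 1/2. -/
/-- The cube root of 2. -/
noncomputable def c13 : ℝ := (2 : ℝ) ^ ((1 : ℝ) / 3)

/-- The folded variable `Q = -2^{-1/3} p/q` evaluated at `t = -s/2^{1/3}`. -/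
noncomputable def foldQ (p q : ℝ → ℂ) (s : ℝ) : ℂ :=
  -(c13 : ℂ)⁻¹ * (p (-s / c13) / q (-s / c13))

/-!
Put `y = p/q`. Along a solution of PII with `θ = 0` one finds `y' = w` with
`w = 2q² + t - y²`, and, after substituting `p = yq`, `w' = 2y³ - 2ty + 1`: all terms in `q`
cancel, so `y'' = 2y³ - 2ty + 1`. The rescaling `Q(s) = -k⁻¹ y(-s/k)` with `k³ = 2`
turns this equation into PII with `θ = -1/2`.
-/

theorem c13_pow_three : c13 ^ 3 = 2 := by
  rw [c13, one_div, ← Nat.cast_ofNat (n := 3)]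
  exact Real.rpow_inv_natCast_pow (by norm_num) (by norm_num)

section Folding

variable {p q : ℝ → ℂ} {t : ℝ}

theorem hasDerivAt_div_of_painleveII (hq : HasDerivAt q (p t) t)
    (hp : HasDerivAt p (2 * q t ^ 3 + t * q t) t) (hne : q t ≠ 0) :
    HasDerivAt (fun t => p t / q t) (2 * q t ^ 2 + t - (p t / q t) ^ 2) t := by
  refine (hp.div hq hne).congr_deriv ?_
  field_simp

theorem hasDerivAt_deriv_div_of_painleveII (hq : HasDerivAt q (p t) t)
    (hp : HasDerivAt p (2 * q t ^ 3 + t * q t) t) (hne : q t ≠ 0) :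
    HasDerivAt (fun t => 2 * q t ^ 2 + t - (p t / q t) ^ 2)
      (2 * (p t / q t) ^ 3 - 2 * t * (p t / q t) + 1) t := by
  have hy := hasDerivAt_div_of_painleveII hq hp hne
  have hw := ((hq.pow 2).const_mul 2).add (hasDerivAt_id t).ofReal_comp |>.sub (hy.pow 2)
  refine hw.congr_deriv ?_
  push_cast
  field_simp
  ring

end Folding

theorem HasDerivAt.comp_neg_div {f : ℝ → ℂ} {f' : ℂ} {k s : ℝ}
    (hf : HasDerivAt f f' (-s / k)) :
    HasDerivAt (fun s => f (-s / k)) (-(k : ℂ)⁻¹ * f') s := by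
  refine (hf.scomp s ((hasDerivAt_id s).neg.div_const k)).congr_deriv ?_
  simp [Complex.real_smul, neg_div]

section Rescaling

variable {y w : ℝ → ℂ} {k : ℝ}

theorem hasDerivAt_rescale (hy : ∀ t, HasDerivAt y (w t) t) (s : ℝ) :
    HasDerivAt (fun s => -(k : ℂ)⁻¹ * y (-s / k)) ((k : ℂ)⁻¹ ^ 2 * w (-s / k)) s := by
  refine (((hy _).comp_neg_div).const_mul (-(k : ℂ)⁻¹)).congr_deriv ?_
  ring

theorem hasDerivAt_rescale_deriv (hk : k ^ 3 = 2)
    (hw : ∀ t, HasDerivAt w (2 * y t ^ 3 - 2 * t * y t + 1) t) (s : ℝ) :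
    HasDerivAt (fun s => (k : ℂ)⁻¹ ^ 2 * w (-s / k))
      (2 * (-(k : ℂ)⁻¹ * y (-s / k)) ^ 3 + s * (-(k : ℂ)⁻¹ * y (-s / k)) - 1 / 2) s := by
  have hk_inv : (k : ℂ)⁻¹ ^ 3 = 1 / 2 := by
    rw [inv_pow, ← Complex.ofReal_pow, hk]
    norm_num
  refine (((hw _).comp_neg_div).const_mul ((k : ℂ)⁻¹ ^ 2)).congr_deriv ?_
  push_cast
  linear_combination (-(2 * s * y (-s / k) * (k : ℂ)⁻¹ + 1)) * hk_inv

end Rescaling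

/-- Folding transformation of Painlevé II with `θ = 0` to Painlevé II with `θ = -1/2`. -/
theorem painleveII_folding (p q : ℝ → ℂ)
    (hq : ∀ t : ℝ, HasDerivAt q (p t) t)
    (hp : ∀ t : ℝ, HasDerivAt p (2 * q t ^ 3 + (t : ℂ) * q t) t)
    (hne : ∀ t : ℝ, q t ≠ 0) :
    ∃ Q' : ℝ → ℂ,
      (∀ s : ℝ, HasDerivAt (foldQ p q) (Q' s) s) ∧
      (∀ s : ℝ, HasDerivAt Q'
        (2 * (foldQ p q s) ^ 3 + (s : ℂ) * foldQ p q s - 1 / 2) s) :=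
  ⟨_, hasDerivAt_rescale fun t => hasDerivAt_div_of_painleveII (hq t) (hp t) (hne t),
    hasDerivAt_rescale_deriv c13_pow_three
      fun t => hasDerivAt_deriv_div_of_painleveII (hq t) (hp t) (hne t)⟩
end

section
/- Let 𝔭₁₂, 𝔭₂₁, 𝔮₁₂, 𝔮₂₁ : ℝ → Mat_n(ℂ) satisfy 𝔮₁₂' = 𝔭₁₂, 𝔮₂₁' = 𝔭₂₁, 𝔭₁₂' = 2𝔮₁₂𝔮₂₁𝔮₁₂ + t𝔮₁₂, 𝔭₂₁' = 2𝔮₂₁𝔮₁₂𝔮₂₁ + t𝔮₂₁. Then the matrix m₂ = 𝔭₂₁𝔮₁₂ − 𝔮₂₁𝔭₁₂ is constant in t. -/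
/-!
The derivative of `m₂ = 𝔭₂₁𝔮₁₂ − 𝔮₂₁𝔭₁₂` is `𝔭₂₁'𝔮₁₂ − 𝔮₂₁𝔭₁₂'`, the terms `𝔭₂₁𝔭₁₂` cancelling.
Substituting the equations of motion, both products equal `2𝔮₂₁𝔮₁₂𝔮₂₁𝔮₁₂ + t𝔮₂₁𝔮₁₂`,
so `m₂` has zero derivative and is constant.
-/

/-- Entrywise derivative of a matrix-valued function of a real variable. -/
def MHasDeriv {n : ℕ} (f f' : ℝ → Matrix (Fin n) (Fin n) ℂ) : Prop :=
  ∀ (t : ℝ) (i j : Fin n), HasDerivAt (fun s : ℝ => f s i j) (f' t i j) t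

namespace MHasDeriv

variable {n : ℕ} {f g f' g' : ℝ → Matrix (Fin n) (Fin n) ℂ}

theorem sub (hf : MHasDeriv f f') (hg : MHasDeriv g g') :
    MHasDeriv (fun t => f t - g t) (fun t => f' t - g' t) :=
  fun t i j => (hf t i j).sub (hg t i j)

theorem mul (hf : MHasDeriv f f') (hg : MHasDeriv g g') :
    MHasDeriv (fun t => f t * g t) (fun t => f' t * g t + f t * g' t) := by
  intro t i j
  simpa only [Matrix.mul_apply, Matrix.add_apply, Finset.sum_add_distrib] using
    HasDerivAt.fun_sum (u := Finset.univ) fun k _ => (hf t i k).fun_mul (hg t k j)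

theorem congr_deriv (hf : MHasDeriv f f') (h : ∀ t, f' t = g' t) : MHasDeriv f g' := by
  intro t i j
  rw [← h t]
  exact hf t i j

theorem eq_of_deriv_zero (hf : MHasDeriv f 0) (t₁ t₂ : ℝ) : f t₁ = f t₂ := by
  ext i j
  exact is_const_of_deriv_eq_zero (fun t => (hf t i j).differentiableAt)
    (fun t => (hf t i j).deriv) t₁ t₂

end MHasDeriv

/-- On the block-antidiagonal invariant subset of 2n×2n matrix Painlevé II with θ = 0,
the matrix `m₂ = 𝔭₂₁𝔮₁₂ − 𝔮₂₁𝔭₁₂` is an integral of motion. -/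
theorem matrixPII_block_integral (n : ℕ)
    (q12 q21 p12 p21 : ℝ → Matrix (Fin n) (Fin n) ℂ)
    (h1 : MHasDeriv q12 p12) (h2 : MHasDeriv q21 p21)
    (h3 : MHasDeriv p12 fun t => (2 : ℂ) • (q12 t * q21 t * q12 t) + (t : ℂ) • q12 t)
    (h4 : MHasDeriv p21 fun t => (2 : ℂ) • (q21 t * q12 t * q21 t) + (t : ℂ) • q21 t) :
    ∀ t₁ t₂ : ℝ,
      p21 t₁ * q12 t₁ - q21 t₁ * p12 t₁ = p21 t₂ * q12 t₂ - q21 t₂ * p12 t₂ := by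
  have hm₂ := (h4.mul h1).sub (h2.mul h3)
  refine MHasDeriv.eq_of_deriv_zero (hm₂.congr_deriv fun t => ?_)
  simp only [Pi.zero_apply, Matrix.add_mul, Matrix.mul_add, Matrix.smul_mul, Matrix.mul_smul,
    Matrix.mul_assoc]
  abel
end

section
/- Let p, q be N×N complex matrices with p invertible, and let α ∈ ℂ. Then the transformation s : (p, q) ↦ (p, q + α p^{-1}) is symplectic in the sense that Tr(dp ∧ dq) is preserved, and moreover [p, q + α p^{-1}] = [p, q]. -/
/-- The Bäcklund reflection `s : (p, q) ↦ (p, q + α p⁻¹)` is symplectic (its differential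
preserves the canonical form `Tr(dp ∧ dq)`) and preserves the commutator `[p, q]`. -/
theorem s2_symplectic_and_commutator (N : ℕ) (p q : Matrix (Fin N) (Fin N) ℂ) (α : ℂ)
    (hp : IsUnit p) :
    (∀ dp1 dq1 dp2 dq2 : Matrix (Fin N) (Fin N) ℂ,
      Matrix.trace (dp1 * (dq2 - α • (p⁻¹ * dp2 * p⁻¹))
        - dp2 * (dq1 - α • (p⁻¹ * dp1 * p⁻¹)))
      = Matrix.trace (dp1 * dq2 - dp2 * dq1)) ∧
    p * (q + α • p⁻¹) - (q + α • p⁻¹) * p = p * q - q * p := by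
  constructor
  · intro dp1 dq1 dp2 dq2
    have key : Matrix.trace (dp1 * (p⁻¹ * dp2 * p⁻¹))
        = Matrix.trace (dp2 * (p⁻¹ * dp1 * p⁻¹)) := by
      rw [show dp1 * (p⁻¹ * dp2 * p⁻¹) = (dp1 * p⁻¹) * dp2 * p⁻¹ by noncomm_ring,
        Matrix.trace_mul_cycle,
        show p⁻¹ * (dp1 * p⁻¹) * dp2 = (p⁻¹ * dp1 * p⁻¹) * dp2 by noncomm_ring,
        Matrix.trace_mul_comm]
    simp only [mul_sub, Matrix.trace_sub, Matrix.mul_smul, Matrix.trace_smul, key]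
    ring
  · have h1 : p * p⁻¹ = 1 :=
      Matrix.mul_nonsing_inv p ((Matrix.isUnit_iff_isUnit_det p).mp hp)
    have h2 : p⁻¹ * p = 1 :=
      Matrix.nonsing_inv_mul p ((Matrix.isUnit_iff_isUnit_det p).mp hp)
    rw [mul_add, add_mul, Matrix.mul_smul, Matrix.smul_mul, h1, h2]
    abel
end

section
/- Let t ≠ 0 and let q be a 2n×2n matrix written in n×n blocks with lower-left block 𝔮₂₁ invertible, satisfying S₂ q S₂^{-1} = t q^{-1} where S₂ = diag(1_n, −1_n). Then q has the form q = [[𝔮₁₁, (𝔮₁₁² − t)𝔮₂₁^{-1}], [𝔮₂₁, 𝔮₂₁ 𝔮₁₁ 𝔮₂₁^{-1}]] for some n×n matrices 𝔮₁₁, 𝔮₂₁; conversely any matrix of this form with 𝔮₂₁ invertible satisfies S₂ q S₂^{-1} q = t·1 (in particular q is invertible with q^{-1} = t^{-1} S₂ q S₂^{-1}). -/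
noncomputable def S2 (n : ℕ) : Matrix (Fin n ⊕ Fin n) (Fin n ⊕ Fin n) ℂ :=
  Matrix.fromBlocks 1 0 0 (-1)

lemma S2_mul_self (n : ℕ) : S2 n * S2 n = 1 := by
  simp [S2, Matrix.fromBlocks_multiply, ← Matrix.fromBlocks_one]

lemma S2_inv (n : ℕ) : (S2 n)⁻¹ = S2 n := Matrix.inv_eq_right_inv (S2_mul_self n)

lemma S2_conj (n : ℕ) (a b c d : Matrix (Fin n) (Fin n) ℂ) :
    S2 n * Matrix.fromBlocks a b c d * S2 n = Matrix.fromBlocks a (-b) (-c) d := by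
  simp [S2, Matrix.fromBlocks_multiply]

lemma smul_one_fromBlocks (n : ℕ) (t : ℂ) :
    (t • (1 : Matrix (Fin n ⊕ Fin n) (Fin n ⊕ Fin n) ℂ)) =
    Matrix.fromBlocks (t • 1) 0 0 (t • 1) := by
  rw [← Matrix.fromBlocks_one, Matrix.fromBlocks_smul]; simp

/-- Parametrization of matrices satisfying `S₂ q S₂⁻¹ = t q⁻¹` with invertible
lower-left block, and the converse identity. -/
theorem nonlinear_fixed_point_parametrization (n : ℕ) (t : ℂ) (ht : t ≠ 0) :
    (∀ q : Matrix (Fin n ⊕ Fin n) (Fin n ⊕ Fin n) ℂ,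
      IsUnit q.toBlocks₂₁ → S2 n * q * (S2 n)⁻¹ = t • q⁻¹ →
      ∃ q11 q21 : Matrix (Fin n) (Fin n) ℂ, IsUnit q21 ∧
        q = Matrix.fromBlocks q11 ((q11 ^ 2 - t • 1) * q21⁻¹) q21 (q21 * q11 * q21⁻¹)) ∧
    (∀ q11 q21 : Matrix (Fin n) (Fin n) ℂ, IsUnit q21 →
      (S2 n * (Matrix.fromBlocks q11 ((q11 ^ 2 - t • 1) * q21⁻¹) q21 (q21 * q11 * q21⁻¹))
          * (S2 n)⁻¹) *
        (Matrix.fromBlocks q11 ((q11 ^ 2 - t • 1) * q21⁻¹) q21 (q21 * q11 * q21⁻¹))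
        = t • 1) := by
  constructor
  · intro q hu hq
    rw [S2_inv] at hq
    by_cases hdet : IsUnit q.det
    · have h2 : S2 n * q * S2 n * q = t • 1 := by
        rw [hq, Matrix.smul_mul, Matrix.nonsing_inv_mul q hdet]
      set a := q.toBlocks₁₁ with ha
      set b := q.toBlocks₁₂ with hb
      set c := q.toBlocks₂₁ with hc
      set d := q.toBlocks₂₂ with hdd
      have hq' : q = Matrix.fromBlocks a b c d := (Matrix.fromBlocks_toBlocks q).symm
      rw [hq', S2_conj, Matrix.fromBlocks_multiply, smul_one_fromBlocks,
        Matrix.fromBlocks_inj] at h2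
      obtain ⟨h11, h12, h21, h22⟩ := h2
      have hcd := (Matrix.isUnit_iff_isUnit_det c).mp hu
      have hc'c : c⁻¹ * c = 1 := Matrix.nonsing_inv_mul c hcd
      have hcc' : c * c⁻¹ = 1 := Matrix.mul_nonsing_inv c hcd
      have hdc : d * c = c * a := by
        linear_combination (norm := noncomm_ring) h21
      have hd' : d = c * a * c⁻¹ := by
        rw [← hdc, mul_assoc, hcc', mul_one]
      have hbc : b * c = a ^ 2 - t • 1 := by
        rw [← h11]; noncomm_ring
      have hb' : b = (a ^ 2 - t • 1) * c⁻¹ := by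
        rw [← hbc, mul_assoc, hcc', mul_one]
      exact ⟨a, c, hu, by rw [hq', hb', hd']⟩
    · have h0 : q⁻¹ = 0 := Matrix.nonsing_inv_apply_not_isUnit q hdet
      rw [h0, smul_zero] at hq
      have hq0 : q = 0 := by
        have h := congrArg (fun m => S2 n * m * S2 n) hq
        simp only [mul_zero, zero_mul] at h
        calc q = (S2 n * S2 n) * q * (S2 n * S2 n) := by rw [S2_mul_self, one_mul, mul_one]
        _ = S2 n * (S2 n * q * S2 n) * S2 n := by noncomm_ring
        _ = 0 := h
      have htb : q.toBlocks₂₁ = 0 := by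
        ext i j; simp [Matrix.toBlocks₂₁, hq0]
      have h01 : (0 : Matrix (Fin n) (Fin n) ℂ) = 1 := isUnit_zero_iff.mp (htb ▸ hu)
      haveI : Subsingleton (Matrix (Fin n) (Fin n) ℂ) := subsingleton_of_zero_eq_one h01
      refine ⟨0, 1, isUnit_one, ?_⟩
      rw [hq0, Subsingleton.elim (((0:Matrix (Fin n) (Fin n) ℂ)^2 - t•1)*(1:Matrix (Fin n) (Fin n) ℂ)⁻¹) 0,
        Subsingleton.elim ((1:Matrix (Fin n) (Fin n) ℂ)*0*(1:Matrix (Fin n) (Fin n) ℂ)⁻¹) 0,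
        Subsingleton.elim (1:Matrix (Fin n) (Fin n) ℂ) 0, Matrix.fromBlocks_zero]
  · intro a c hc
    have hcd := (Matrix.isUnit_iff_isUnit_det c).mp hc
    have hc'c : c⁻¹ * c = 1 := Matrix.nonsing_inv_mul c hcd
    have hcc' : c * c⁻¹ = 1 := Matrix.mul_nonsing_inv c hcd
    have hcan : ∀ x : Matrix (Fin n) (Fin n) ℂ, c⁻¹ * (c * x) = x := fun x => by
      rw [← mul_assoc, hc'c, one_mul]
    rw [S2_inv, S2_conj, Matrix.fromBlocks_multiply, smul_one_fromBlocks,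
      Matrix.fromBlocks_inj]
    have key : a * (a ^ 2 - t • 1) = (a ^ 2 - t • 1) * a := by
      have : a * (t • (1 : Matrix (Fin n) (Fin n) ℂ)) = (t • 1) * a := by
        rw [mul_smul_comm, smul_mul_assoc, mul_one, one_mul]
      rw [mul_sub, sub_mul, this, pow_two, mul_assoc]
    refine ⟨?_, ?_, ?_, ?_⟩
    · rw [neg_mul, mul_assoc, hc'c, mul_one]; noncomm_ring
    · rw [neg_mul]
      simp only [mul_assoc]
      rw [hcan, ← mul_assoc a, key, mul_assoc]
      simp
    · rw [neg_mul, mul_assoc (c * a), hc'c, mul_one]; simp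
    · have h : -((a ^ 2 - t • 1) * c⁻¹) + a * (a * c⁻¹) = t • c⁻¹ := by
        rw [sub_mul, pow_two, smul_mul_assoc, one_mul, mul_assoc]
        abel
      simp only [neg_mul, mul_assoc, hcan]
      rw [← mul_neg, ← mul_add, h, mul_smul_comm, hcc']
end
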